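/- Endow {0,?,1} with the partial order in which 0 ⊲ ? and 1 ⊲ ? (0 and 1 incomparable). Let η, η̃ ∈ {0,?,1}^ℤ satisfy η(x) ⊴ η̃(x) for all x. Then for each n ∈ ℤ, F̂_{p,q}η̃(n) stochastically dominates F̂_{p,q}η(n) with respect to ⊴: for every upward-closed subset U of ({0,?,1}, ⊴), Prob[F̂η(n) ∈ U] ≤ Prob[F̂η̃(n) ∈ U]. -/

import Mathlib

open MeasureTheory

inductive PSym : Type
  | zero : PSym
  | quest : PSym
  | one : PSym
deriving DecidableEq

instance : Fintype PSym where
  elems := {PSym.zero, PSym.quest, PSym.one}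
  complete := fun x => by cases x <;> simp

instance : MeasurableSpace PSym := ⊤

abbrev Config : Type := ℤ → PSym

open PSym

/-- the symbol lies in `{0, ?}` -/
def lowQ (a : PSym) : Prop := a = PSym.zero ∨ a = PSym.quest

instance : DecidablePred lowQ := fun a => by unfold lowQ; infer_instance

/-- the window `(η k, η (k+1))` lies in `{0,?}² \ {(0,0)}` -/
def star2 (η : Config) (k : ℤ) : Prop :=
  lowQ (η k) ∧ lowQ (η (k + 1)) ∧ ¬(η k = PSym.zero ∧ η (k + 1) = PSym.zero)

/-- the window `(η k, η (k+1), η (k+2))` lies in `{0,?}³ \ {(0,0,0)}` -/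
def star3 (η : Config) (k : ℤ) : Prop :=
  lowQ (η k) ∧ lowQ (η (k + 1)) ∧ lowQ (η (k + 2)) ∧
    ¬(η k = PSym.zero ∧ η (k + 1) = PSym.zero ∧ η (k + 2) = PSym.zero)

/-- translation by `k` -/
def shiftBy (k : ℤ) (η : Config) : Config := fun n => η (n + k)

/-- reflection -/
def reflect (η : Config) : Config := fun n => η (-n)

/-- the single-site stochastic update rule of the envelope PCA `F̂_{p,q}`:
`phi p q a b c d` is the probability that the output symbol is `d` when the
neighbourhood reads `(a, b, c)`. -/
noncomputable def phi (p q : ℝ) (a b c d : PSym) : ℝ :=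
  if a = PSym.zero ∧ b = PSym.zero ∧ c = PSym.zero then
    (if d = PSym.zero then p else if d = PSym.one then 1 - p else 0)
  else if lowQ a ∧ lowQ b ∧ lowQ c then
    (if d = PSym.zero then p else if d = PSym.one then q else 1 - p - q)
  else
    (if d = PSym.zero then 1 - q else if d = PSym.one then q else 0)

/-- the partial order with `0 ⊴ ?`, `1 ⊴ ?`, and `0, 1` incomparable -/
def qrel (a b : PSym) : Prop := a = b ∨ b = PSym.quest

/-!
The law of the output depends on the window only through one symbol: `0` for `(0,0,0)`, `1` if
the window contains a `1`, and `?` otherwise; this symbol is monotone in the window. Replacing it by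
`?` lowers the probabilities of `0` and of `1` (this is where `p + q ≤ 1` enters) and keeps the
total mass, and every nonempty upward-closed set contains `?`, so its probability can only grow.
-/

theorem sum_le_sum_of_total_eq_of_le_off {α : Type*} [Fintype α] [DecidableEq α]
    {μ ν : α → ℝ} (htotal : ∑ d, μ d = ∑ d, ν d) {t : α} (hle : ∀ d, d ≠ t → ν d ≤ μ d)
    {U : Finset α} (ht : t ∈ U) :
    ∑ d ∈ U, μ d ≤ ∑ d ∈ U, ν d := by
  have hcompl : ∑ d ∈ Uᶜ, ν d ≤ ∑ d ∈ Uᶜ, μ d :=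
    Finset.sum_le_sum fun d hd => hle d fun hdt => Finset.mem_compl.mp hd (hdt ▸ ht)
  have hμ := Finset.sum_add_sum_compl U μ
  have hν := Finset.sum_add_sum_compl U ν
  linarith

theorem quest_mem_of_upwardClosed {U : Finset PSym} (hU : ∀ a b : PSym, a ∈ U → qrel a b → b ∈ U)
    (hne : U.Nonempty) : quest ∈ U :=
  let ⟨a, ha⟩ := hne
  hU a quest ha (Or.inr rfl)

def windowClass (a b c : PSym) : PSym :=
  if a = zero ∧ b = zero ∧ c = zero then zero
  else if lowQ a ∧ lowQ b ∧ lowQ c then quest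
  else one

theorem phi_eq_phi_windowClass (p q : ℝ) (a b c : PSym) :
    phi p q a b c = phi p q (windowClass a b c) (windowClass a b c) (windowClass a b c) := by
  funext d
  cases a <;> cases b <;> cases c <;> simp [phi, windowClass, lowQ]

theorem windowClass_mono {a b c a' b' c' : PSym}
    (ha : qrel a a') (hb : qrel b b') (hc : qrel c c') :
    qrel (windowClass a b c) (windowClass a' b' c') := by
  rcases ha with rfl | rfl <;> rcases hb with rfl | rfl <;> rcases hc with rfl | rfl <;>
    cases a <;> cases b <;> cases c <;> simp [qrel, windowClass, lowQ]

theorem sum_phi_const (p q : ℝ) (s : PSym) : ∑ d, phi p q s s s d = 1 := by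
  change ∑ d ∈ {zero, quest, one}, phi p q s s s d = 1
  cases s <;> simp [phi, lowQ]

theorem phi_quest_le (p q : ℝ) (hpq : p + q ≤ 1) (s d : PSym) (hd : d ≠ quest) :
    phi p q quest quest quest d ≤ phi p q s s s d := by
  cases s <;> cases d <;> simp_all [phi, lowQ] <;> linarith

theorem stmt16_general (p q : ℝ)
    (hpq : p + q ≤ 1) (η ηt : Config)
    (hle : ∀ x : ℤ, qrel (η x) (ηt x)) (n : ℤ)
    (U : Finset PSym) (hU : ∀ a b : PSym, a ∈ U → qrel a b → b ∈ U) :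
    ∑ b ∈ U, phi p q (η n) (η (n + 1)) (η (n + 2)) b ≤
      ∑ b ∈ U, phi p q (ηt n) (ηt (n + 1)) (ηt (n + 2)) b := by
  rw [phi_eq_phi_windowClass, phi_eq_phi_windowClass p q (ηt n)]
  rcases windowClass_mono (hle n) (hle (n + 1)) (hle (n + 2)) with heq | htop
  · rw [heq]
  rcases U.eq_empty_or_nonempty with rfl | hne
  · simp
  rw [htop]
  exact sum_le_sum_of_total_eq_of_le_off (by rw [sum_phi_const, sum_phi_const])
    (phi_quest_le p q hpq _) (quest_mem_of_upwardClosed hU hne)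

theorem stmt16 (p q : ℝ) (hp0 : 0 ≤ p) (hp1 : p ≤ 1) (hq0 : 0 ≤ q) (hq1 : q ≤ 1)
    (hpq : p + q ≤ 1) (η ηt : Config)
    (hle : ∀ x : ℤ, qrel (η x) (ηt x)) (n : ℤ)
    (U : Finset PSym) (hU : ∀ a b : PSym, a ∈ U → qrel a b → b ∈ U) :
    ∑ b ∈ U, phi p q (η n) (η (n + 1)) (η (n + 2)) b ≤
      ∑ b ∈ U, phi p q (ηt n) (ηt (n + 1)) (ηt (n + 2)) b :=
  stmt16_general p q hpq η ηt hle n U hU
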